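/- Let g ∈ L¹(ℝ) be even with bounded derivatives up to order 3 on [−1,1], and θ_g(z) = (1/2π) η_g(e^{iz(·)}) its associated holomorphic function, continuously extended to the closed strip {|Im z| ≤ 2}. Then for all x ∈ ℝ: i·Im θ_g(x − 2i) − θ_g(x) = (1/2π) η̃_g(e^{ix(·)}), where η̃_g is the principal value distribution associated to g(k)/k. -/

import Mathlib

/-!
With `w = i z k`, the bracket `e^w - e^{-w} - 2w` is `O(|w|³ e^{|w|})` near `k = 0` and
`O(e^{2k} + k)` for large `k` when `|Im z| ≤ 2`, hence `O(k (cosh 2k - 1))` uniformly in `k > 0`;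
so the integrals defining `θ_g` converge absolutely as soon as `g ∈ L¹`. The identity then holds
pointwise in `k`: at `z = x - 2i` the imaginary part of the bracket is `2 sin(kx) cosh 2k - 2kx`,
at `z = x` the bracket is `2i (sin(kx) - kx)`, and the difference `2i sin(kx) (cosh 2k - 1)`
cancels the denominator.
-/

open MeasureTheory Complex

/-- `θ_g(z) = (1/2π) η_g(e^{iz(·)})`. -/
noncomputable def theta (g : ℝ → ℝ) (z : ℂ) : ℂ :=
  (1 / (2 * Real.pi)) *
    ∫ k in Set.Ioi (0 : ℝ),
      ((g k / (k * (Real.cosh (2 * k) - 1)) : ℝ) : ℂ) *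
        (Complex.exp (Complex.I * z * k) - Complex.exp (-(Complex.I * z * k)) -
          2 * Complex.I * z * k)

noncomputable def thetaIntegrand (g : ℝ → ℝ) (z : ℂ) (k : ℝ) : ℂ :=
  ((g k / (k * (Real.cosh (2 * k) - 1)) : ℝ) : ℂ) *
    (exp (I * z * k) - exp (-(I * z * k)) - 2 * I * z * k)

noncomputable def etaTildeIntegrand (g : ℝ → ℝ) (x k : ℝ) : ℂ :=
  ((g k / k : ℝ) : ℂ) * (exp (I * x * k) - exp (-(I * x * k)))

theorem theta_eq_integral_thetaIntegrand (g : ℝ → ℝ) (z : ℂ) :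
    theta g z = 1 / (2 * Real.pi) * ∫ k in Set.Ioi 0, thetaIntegrand g z k :=
  rfl

theorem two_mul_pow_three_le_mul_cosh_sub_one {k : ℝ} (hk : 0 ≤ k) :
    2 * k ^ 3 ≤ k * (Real.cosh (2 * k) - 1) := by
  have hcosh : Real.cosh (2 * k) - 1 = 2 * Real.sinh k ^ 2 := by
    rw [Real.cosh_two_mul, Real.cosh_sq]; ring
  have hsinh : k ≤ Real.sinh k := Real.self_le_sinh_iff.2 hk
  have hsq : k ^ 2 ≤ Real.sinh k ^ 2 := pow_le_pow_left₀ hk hsinh 2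
  rw [hcosh]
  nlinarith

theorem exp_two_mul_le_four_mul_cosh_sub_one {k : ℝ} (hk : 1 ≤ k) :
    Real.exp (2 * k) ≤ 4 * (Real.cosh (2 * k) - 1) := by
  have hfour : 4 ≤ Real.exp (2 * k) := by
    rw [two_mul, Real.exp_add]
    nlinarith [Real.add_one_le_exp k]
  rw [Real.cosh_eq]
  nlinarith [Real.exp_pos (-(2 * k))]

theorem norm_exp_sub_exp_neg_sub_two_mul_le (w : ℂ) :
    ‖exp w - exp (-w) - 2 * w‖ ≤ 2 * ‖w‖ ^ 3 * Real.exp ‖w‖ := by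
  have hpos := norm_exp_sub_sum_le_norm_mul_exp w 3
  have hneg := norm_exp_sub_sum_le_norm_mul_exp (-w) 3
  norm_num [Finset.sum_range_succ, Nat.factorial] at hpos hneg
  calc ‖exp w - exp (-w) - 2 * w‖
      = ‖(exp w - (1 + w + w ^ 2 / 2)) - (exp (-w) - (1 + -w + w ^ 2 / 2))‖ := by
        congr 1; ring
    _ ≤ ‖w‖ ^ 3 * Real.exp ‖w‖ + ‖w‖ ^ 3 * Real.exp ‖w‖ :=
        (norm_sub_le _ _).trans (add_le_add hpos hneg)
    _ = 2 * ‖w‖ ^ 3 * Real.exp ‖w‖ := by ring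

theorem norm_exp_I_mul_sub_le_mul_cosh_sub_one {z : ℂ} (hz : |z.im| ≤ 2) {k : ℝ} (hk : 0 < k) :
    ‖exp (I * z * k) - exp (-(I * z * k)) - 2 * I * z * k‖ ≤
      (‖z‖ ^ 3 * Real.exp ‖z‖ + ‖z‖ + 8) * (k * (Real.cosh (2 * k) - 1)) := by
  set w := I * z * k with hw_def
  have hw : ‖w‖ = ‖z‖ * k := by simp [hw_def, abs_of_pos hk]
  have hre : |w.re| ≤ 2 * k := by
    simpa [hw_def, abs_mul, abs_of_pos hk] using mul_le_mul_of_nonneg_right hz hk.le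
  have hden := two_mul_pow_three_le_mul_cosh_sub_one hk.le
  have hkc : 0 ≤ k * (Real.cosh (2 * k) - 1) := by nlinarith [pow_pos hk 3]
  have hz0 := norm_nonneg z
  rw [show 2 * I * z * k = 2 * w by ring]
  rcases le_total k 1 with hk1 | hk1
  · calc ‖exp w - exp (-w) - 2 * w‖
        ≤ 2 * ‖w‖ ^ 3 * Real.exp ‖w‖ := norm_exp_sub_exp_neg_sub_two_mul_le w
      _ ≤ 2 * (‖z‖ ^ 3 * k ^ 3) * Real.exp ‖z‖ := by
          rw [hw, mul_pow]; gcongr; exact mul_le_of_le_one_right hz0 hk1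
      _ ≤ ‖z‖ ^ 3 * Real.exp ‖z‖ * (k * (Real.cosh (2 * k) - 1)) := by
          nlinarith [mul_nonneg (pow_nonneg hz0 3) (Real.exp_pos ‖z‖).le]
      _ ≤ _ := by gcongr; linarith
  · have hexp : ∀ v : ℂ, |v.re| ≤ 2 * k → ‖exp v‖ ≤ Real.exp (2 * k) := fun v hv => by
      rw [norm_exp]; exact Real.exp_le_exp.2 (le_of_abs_le hv)
    have hcosh := exp_two_mul_le_four_mul_cosh_sub_one hk1
    calc ‖exp w - exp (-w) - 2 * w‖
        ≤ ‖exp w‖ + ‖exp (-w)‖ + ‖2 * w‖ :=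
          (norm_sub_le _ _).trans (by gcongr; exact norm_sub_le _ _)
      _ ≤ 2 * Real.exp (2 * k) + 2 * (‖z‖ * k) := by
          rw [norm_mul, hw, Complex.norm_two]
          linarith [hexp w hre, hexp (-w) (by simpa using hre)]
      _ ≤ (‖z‖ ^ 3 * Real.exp ‖z‖ + ‖z‖ + 8) * (k * (Real.cosh (2 * k) - 1)) := by
          have hexp_le : Real.exp (2 * k) ≤ 4 * (k * (Real.cosh (2 * k) - 1)) := by
            nlinarith
          have hlin_le : 2 * k ≤ k * (Real.cosh (2 * k) - 1) := by
            nlinarith [mul_le_mul hk1 hk1 zero_le_one hk.le]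
          nlinarith [mul_le_mul_of_nonneg_left hlin_le hz0,
            mul_nonneg (mul_nonneg (pow_nonneg hz0 3) (Real.exp_pos ‖z‖).le) hkc]

theorem integrableOn_thetaIntegrand {g : ℝ → ℝ} (hg : Integrable g) {z : ℂ} (hz : |z.im| ≤ 2) :
    IntegrableOn (thetaIntegrand g z) (Set.Ioi 0) := by
  set M := ‖z‖ ^ 3 * Real.exp ‖z‖ + ‖z‖ + 8
  have hmeas : AEStronglyMeasurable (thetaIntegrand g z) := by
    refine .mul (continuous_ofReal.comp_aestronglyMeasurable ?_) (by fun_prop)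
    exact (hg.1.aemeasurable.div (by fun_prop)).aestronglyMeasurable
  refine ((hg.abs.const_mul M).integrableOn).mono' hmeas.restrict ?_
  filter_upwards [ae_restrict_mem measurableSet_Ioi] with k (hk : 0 < k)
  have hden : 0 < k * (Real.cosh (2 * k) - 1) :=
    mul_pos hk (sub_pos.2 (Real.one_lt_cosh.2 (by positivity)))
  rw [thetaIntegrand, norm_mul, norm_real, Real.norm_eq_abs, abs_div, abs_of_pos hden,
    div_mul_eq_mul_div, div_le_iff₀ hden]
  calc |g k| * ‖exp (I * z * k) - exp (-(I * z * k)) - 2 * I * z * k‖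
      ≤ |g k| * (M * (k * (Real.cosh (2 * k) - 1))) := by
        gcongr; exact norm_exp_I_mul_sub_le_mul_cosh_sub_one hz hk
    _ = M * |g k| * (k * (Real.cosh (2 * k) - 1)) := by ring

theorem I_mul_im_thetaIntegrand_sub_thetaIntegrand (g : ℝ → ℝ) (x : ℝ) {k : ℝ} (hk : 0 < k) :
    I * ((thetaIntegrand g (x - 2 * I) k).im : ℂ) - thetaIntegrand g x k =
      etaTildeIntegrand g x k := by
  have hc : Real.cosh (2 * k) - 1 ≠ 0 := (sub_pos.2 (Real.one_lt_cosh.2 (by positivity))).ne'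
  rw [thetaIntegrand, thetaIntegrand, etaTildeIntegrand]
  set r := g k / (k * (Real.cosh (2 * k) - 1))
  have hr : r * (Real.cosh (2 * k) - 1) = g k / k := by
    rw [div_mul_eq_mul_div, mul_div_mul_right _ _ hc]
  rw [Real.cosh_eq] at hr
  apply Complex.ext <;> simp [exp_re, exp_im, -ofReal_mul]
  linear_combination (2 * Real.sin (x * k)) * hr

theorem I_mul_im_integral_sub_integral {α : Type*} [MeasurableSpace α] {μ : Measure α}
    {F G : α → ℂ} (hF : Integrable F μ) (hG : Integrable G μ) :
    I * ((∫ a, F a ∂μ).im : ℂ) - ∫ a, G a ∂μ = ∫ a, (I * ((F a).im : ℂ) - G a) ∂μ := by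
  have hImF : Integrable (fun a => I * ((F a).im : ℂ)) μ := hF.im.ofReal.const_mul I
  rw [integral_sub hImF hG, integral_const_mul, integral_complex_ofReal]
  congr
  exact (integral_im hF).symm

theorem theta_boundary_identity_general (g : ℝ → ℝ) (hg : Integrable g) :
    ∀ x : ℝ,
      Complex.I * ((theta g ((x : ℂ) - 2 * Complex.I)).im : ℂ) - theta g (x : ℂ) =
        (1 / (2 * Real.pi)) *
          ∫ k in Set.Ioi (0 : ℝ),
            ((g k / k : ℝ) : ℂ) *
              (Complex.exp (Complex.I * x * k) - Complex.exp (-(Complex.I * x * k))) := by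
  intro x
  have hlower := integrableOn_thetaIntegrand hg (z := x - 2 * I) (by simp)
  have hreal := integrableOn_thetaIntegrand hg (z := x) (by simp)
  have hc : (1 / (2 * Real.pi : ℂ)) = ((1 / (2 * Real.pi) : ℝ) : ℂ) := by push_cast; ring
  rw [theta_eq_integral_thetaIntegrand, theta_eq_integral_thetaIntegrand, hc, im_ofReal_mul,
    ofReal_mul, mul_left_comm, ← mul_sub, I_mul_im_integral_sub_integral hlower hreal]
  congr 1
  exact setIntegral_congr_fun measurableSet_Ioi fun k hk =>
    I_mul_im_thetaIntegrand_sub_thetaIntegrand g x hk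

theorem theta_boundary_identity (g : ℝ → ℝ) (hg : Integrable g)
    (heven : ∀ k, g (-k) = g k)
    (hreg : ContDiffOn ℝ 3 g (Set.Icc (-1 : ℝ) 1))
    (hbdd : ∀ j : ℕ, j ≤ 3 → ∃ C : ℝ, ∀ x ∈ Set.Icc (-1 : ℝ) 1,
      |iteratedDeriv j g x| ≤ C) :
    ∀ x : ℝ,
      Complex.I * ((theta g ((x : ℂ) - 2 * Complex.I)).im : ℂ) - theta g (x : ℂ) =
        (1 / (2 * Real.pi)) *
          ∫ k in Set.Ioi (0 : ℝ),
            ((g k / k : ℝ) : ℂ) *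
              (Complex.exp (Complex.I * x * k) - Complex.exp (-(Complex.I * x * k))) :=
  theta_boundary_identity_general g hg
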